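/- Let n, k, r be integers with k, r ≥ 2 and n ≥ k + r, and let H be a vertex-k-maximal r-uniform hypergraph on n vertices with separation triple (S, H_1, H_2). If e ∈ E(H_1^c) ∪ E(H_2^c), then every subhypergraph H' of H + e with κ(H') ≥ k + 1 is either a subhypergraph of H_1 + e or a subhypergraph of H_2 + e. Furthermore, if e ∈ E(H_i^c) ∖ E((H[S])^c) for i ∈ {1, 2}, then every such H' is a subhypergraph of H_i + e. -/

import Mathlib

/-- A finite hypergraph: a finite vertex set together with a finite set of
non-empty edges, each a subset of the vertex set. -/
structure NatHypergraph where
  verts : Finset ℕ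
  edges : Finset (Finset ℕ)
  edge_sub : ∀ e ∈ edges, e ⊆ verts
  edge_nonempty : ∀ e ∈ edges, e.Nonempty

namespace NatHypergraph

/-- `H` is `r`-uniform if every edge has cardinality `r`. -/
def IsUniform (H : NatHypergraph) (r : ℕ) : Prop := ∀ e ∈ H.edges, e.card = r

/-- `H'` is a subhypergraph of `H`. -/
def IsSub (H' H : NatHypergraph) : Prop := H'.verts ⊆ H.verts ∧ H'.edges ⊆ H.edges

/-- Two vertices are adjacent if some edge contains both. -/
def Adj (H : NatHypergraph) (u v : ℕ) : Prop := ∃ e ∈ H.edges, u ∈ e ∧ v ∈ e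

/-- `H` is connected if every pair of vertices is joined by a path
(equivalently, a walk, i.e. is reachable via the adjacency relation). -/
def Connected (H : NatHypergraph) : Prop :=
  ∀ u ∈ H.verts, ∀ v ∈ H.verts, Relation.ReflTransGen H.Adj u v

/-- The subhypergraph of `H` induced by the vertex set `Y`. -/
def induce (H : NatHypergraph) (Y : Finset ℕ) : NatHypergraph where
  verts := H.verts ∩ Y
  edges := H.edges.filter (fun e => e ⊆ Y)
  edge_sub := by
    intro e he
    simp only [Finset.mem_filter] at he
    exact Finset.subset_inter (H.edge_sub e he.1) he.2
  edge_nonempty := by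
    intro e he
    simp only [Finset.mem_filter] at he
    exact H.edge_nonempty e he.1

/-- `X` is a vertex-cut of `H` if deleting `X` leaves a disconnected hypergraph. -/
def IsVertexCut (H : NatHypergraph) (X : Finset ℕ) : Prop :=
  X ⊆ H.verts ∧ ¬ (H.induce (H.verts \ X)).Connected

open Classical in
/-- The vertex-connectivity of `H`: the minimum cardinality of a vertex-cut if one
exists, and `|V(H)| - 1` otherwise. -/
noncomputable def kappa (H : NatHypergraph) : ℕ :=
  if ∃ X, H.IsVertexCut X then sInf {m | ∃ X, H.IsVertexCut X ∧ X.card = m}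
  else H.verts.card - 1

/-- `κ̄(H)`: the maximum vertex-connectivity over all subhypergraphs of `H`. -/
noncomputable def kappaBar (H : NatHypergraph) : ℕ :=
  sSup {m | ∃ H' : NatHypergraph, H'.IsSub H ∧ H'.kappa = m}

/-- `H + e`: add the edge `e` (a non-empty subset of the vertices) to `H`. -/
def addEdge (H : NatHypergraph) (e : Finset ℕ) : NatHypergraph where
  verts := H.verts
  edges := if e ⊆ H.verts ∧ e.Nonempty then insert e H.edges else H.edges
  edge_sub := by
    intro f hf
    split at hf
    · rcases Finset.mem_insert.mp hf with rfl | hf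
      · exact (by assumption : f ⊆ H.verts ∧ f.Nonempty).1
      · exact H.edge_sub f hf
    · exact H.edge_sub f hf
  edge_nonempty := by
    intro f hf
    split at hf
    · rcases Finset.mem_insert.mp hf with rfl | hf
      · exact (by assumption : f ⊆ H.verts ∧ f.Nonempty).2
      · exact H.edge_nonempty f hf
    · exact H.edge_nonempty f hf

/-- `H + F`: add a set `F` of edges to `H`. -/
def addEdges (H : NatHypergraph) (F : Finset (Finset ℕ)) : NatHypergraph where
  verts := H.verts
  edges := H.edges ∪ F.filter (fun e => e ⊆ H.verts ∧ e.Nonempty)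
  edge_sub := by
    intro f hf
    rcases Finset.mem_union.mp hf with hf | hf
    · exact H.edge_sub f hf
    · exact (Finset.mem_filter.mp hf).2.1
  edge_nonempty := by
    intro f hf
    rcases Finset.mem_union.mp hf with hf | hf
    · exact H.edge_nonempty f hf
    · exact (Finset.mem_filter.mp hf).2.2

/-- `H` is vertex-`k`-maximal (as an `r`-uniform hypergraph): `κ̄(H) ≤ k`, but adding
any edge of the complement `H^c` creates a subhypergraph of connectivity at least `k + 1`. -/
def VertexKMaximal (H : NatHypergraph) (r k : ℕ) : Prop :=
  H.IsUniform r ∧ H.kappaBar ≤ k ∧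
    ∀ e : Finset ℕ, e ⊆ H.verts → e.card = r → e ∉ H.edges →
      k + 1 ≤ (H.addEdge e).kappaBar

/-- The complete `r`-uniform hypergraph on the vertex set `V`. -/
def completeHG (V : Finset ℕ) (r : ℕ) : NatHypergraph where
  verts := V
  edges := (V.powersetCard r).filter (fun e => e.Nonempty)
  edge_sub := by
    intro e he
    simp only [Finset.mem_filter, Finset.mem_powersetCard] at he
    exact he.1.1
  edge_nonempty := by
    intro e he
    exact (Finset.mem_filter.mp he).2

/-- The hypergraph on vertex set `V` with no edges. -/
def emptyHG (V : Finset ℕ) : NatHypergraph where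
  verts := V
  edges := ∅
  edge_sub := by simp
  edge_nonempty := by simp

/-- The `r`-join `H₁ ∨_r H₂`: the union of `H₁` and `H₂` together with all
`r`-element subsets of `V(H₁) ∪ V(H₂)` meeting both `V(H₁)` and `V(H₂)`. -/
def rJoin (H1 H2 : NatHypergraph) (r : ℕ) : NatHypergraph where
  verts := H1.verts ∪ H2.verts
  edges := H1.edges ∪ H2.edges ∪
    ((H1.verts ∪ H2.verts).powersetCard r).filter
      (fun e => (e ∩ H1.verts).Nonempty ∧ (e ∩ H2.verts).Nonempty)
  edge_sub := by
    intro e he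
    rcases Finset.mem_union.mp he with he | he
    · rcases Finset.mem_union.mp he with he | he
      · exact (H1.edge_sub e he).trans Finset.subset_union_left
      · exact (H2.edge_sub e he).trans Finset.subset_union_right
    · exact (Finset.mem_powersetCard.mp (Finset.mem_filter.mp he).1).1
  edge_nonempty := by
    intro e he
    rcases Finset.mem_union.mp he with he | he
    · rcases Finset.mem_union.mp he with he | he
      · exact H1.edge_nonempty e he
      · exact H2.edge_nonempty e he
    · obtain ⟨x, hx⟩ := (Finset.mem_filter.mp he).2.1
      exact ⟨x, (Finset.mem_inter.mp hx).1⟩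

/-- The union of two hypergraphs. -/
def hUnion (H1 H2 : NatHypergraph) : NatHypergraph where
  verts := H1.verts ∪ H2.verts
  edges := H1.edges ∪ H2.edges
  edge_sub := by
    intro e he
    rcases Finset.mem_union.mp he with he | he
    · exact (H1.edge_sub e he).trans Finset.subset_union_left
    · exact (H2.edge_sub e he).trans Finset.subset_union_right
  edge_nonempty := by
    intro e he
    rcases Finset.mem_union.mp he with he | he
    · exact H1.edge_nonempty e he
    · exact H2.edge_nonempty e he

/-- The union of the hypergraphs `f 0, …, f (m-1)`. -/
def unionOver (m : ℕ) (f : ℕ → NatHypergraph) : NatHypergraph where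
  verts := (Finset.range m).biUnion (fun i => (f i).verts)
  edges := (Finset.range m).biUnion (fun i => (f i).edges)
  edge_sub := by
    intro e he
    obtain ⟨i, hi, hei⟩ := Finset.mem_biUnion.mp he
    exact ((f i).edge_sub e hei).trans (Finset.subset_biUnion_of_mem (fun i => (f i).verts) hi)
  edge_nonempty := by
    intro e he
    obtain ⟨i, _, hei⟩ := Finset.mem_biUnion.mp he
    exact (f i).edge_nonempty e hei

/-- `C` is a component of `G`: a maximal connected subhypergraph. -/
def IsComponent (G C : NatHypergraph) : Prop :=
  C.IsSub G ∧ C.Connected ∧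
    ∀ C' : NatHypergraph, C'.IsSub G → C'.Connected → C.IsSub C' → C' = C

/-- `(S, H₁, H₂)` is a separation triple of `H`: `S` is a minimum vertex-cut,
`H₁ = H[S ∪ V(C₁)]` and `H₂ = H[S ∪ V(C₂)]`, where `C₁` is a component of `H - S`
and `C₂ = H - (S ∪ V(C₁))`. -/
def IsSeparationTriple (H : NatHypergraph) (S : Finset ℕ) (H1 H2 : NatHypergraph) : Prop :=
  H.IsVertexCut S ∧ (∀ X : Finset ℕ, H.IsVertexCut X → S.card ≤ X.card) ∧
    ∃ C1 : NatHypergraph, IsComponent (H.induce (H.verts \ S)) C1 ∧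
      H1 = H.induce (S ∪ C1.verts) ∧
      H2 = H.induce (S ∪ (H.verts \ (S ∪ C1.verts)))

end NatHypergraph

/-! A subhypergraph `H'` of `H + e` with `κ(H') ≥ k + 1 > |S|` cannot meet both sides of the
minimum cut `S`, since its vertices in `S` would separate it; so it lies in `H₁ + e` or `H₂ + e`.
If `e` has a vertex outside `S` on the side of `Hᵢ`, then `H'` cannot lie in the other side plus
`e` either: it would miss `e`, hence be a subhypergraph of `H` with `κ(H') > k ≥ κ̄(H)`. -/

namespace NatHypergraph

instance (H : NatHypergraph) : Std.Symm H.Adj :=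
  ⟨fun _ _ ⟨g, hg, hx, hy⟩ => ⟨g, hg, hy, hx⟩⟩

lemma IsSub.trans {H₁ H₂ H₃ : NatHypergraph} (h₁₂ : H₁.IsSub H₂) (h₂₃ : H₂.IsSub H₃) :
    H₁.IsSub H₃ :=
  ⟨h₁₂.1.trans h₂₃.1, h₁₂.2.trans h₂₃.2⟩

lemma induce_isSub (H : NatHypergraph) (Y : Finset ℕ) : (H.induce Y).IsSub H :=
  ⟨Finset.inter_subset_left, Finset.filter_subset _ _⟩

lemma induce_edges_mono (H : NatHypergraph) {Y Z : Finset ℕ} (hYZ : Y ⊆ Z) :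
    (H.induce Y).edges ⊆ (H.induce Z).edges :=
  fun _ hg => Finset.mem_filter.mpr
    ⟨(Finset.mem_filter.mp hg).1, (Finset.mem_filter.mp hg).2.trans hYZ⟩

lemma eq_or_mem_of_mem_addEdge {H : NatHypergraph} {e g : Finset ℕ}
    (hg : g ∈ (H.addEdge e).edges) : g = e ∨ g ∈ H.edges := by
  unfold addEdge at hg
  split_ifs at hg
  · exact Finset.mem_insert.mp hg
  · exact Or.inr hg

lemma IsSub.of_addEdge {H' H : NatHypergraph} {e : Finset ℕ} (h : H'.IsSub (H.addEdge e))
    (he : e ∉ H'.edges) : H'.IsSub H := by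
  refine ⟨h.1, fun g hg => (eq_or_mem_of_mem_addEdge (h.2 hg)).resolve_left ?_⟩
  rintro rfl
  exact he hg

lemma IsSub.induce_addEdge {H' H : NatHypergraph} {e W : Finset ℕ}
    (h : H'.IsSub (H.addEdge e)) (hW : H'.verts ⊆ W) :
    H'.IsSub ((H.induce W).addEdge e) := by
  refine ⟨Finset.subset_inter h.1 hW, fun g hg => ?_⟩
  have hgW : g ⊆ W := (H'.edge_sub g hg).trans hW
  rcases eq_or_mem_of_mem_addEdge (h.2 hg) with rfl | hgH
  · have hgV : g ⊆ (H.induce W).verts := Finset.subset_inter ((H'.edge_sub g hg).trans h.1) hgW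
    simp only [addEdge, if_pos (And.intro hgV (H'.edge_nonempty g hg)), Finset.mem_insert_self]
  · have hgi : g ∈ (H.induce W).edges := Finset.mem_filter.mpr ⟨hgH, hgW⟩
    unfold addEdge
    split_ifs
    · exact Finset.mem_insert_of_mem hgi
    · exact hgi

lemma kappa_le_card (H : NatHypergraph) : H.kappa ≤ H.verts.card := by
  unfold kappa
  split_ifs with h
  · obtain ⟨X, hX⟩ := h
    exact le_trans (Nat.sInf_le ⟨X, hX, rfl⟩) (Finset.card_le_card hX.1)
  · omega

lemma kappa_le_card_of_isVertexCut {H : NatHypergraph} {X : Finset ℕ} (hX : H.IsVertexCut X) :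
    H.kappa ≤ X.card := by
  unfold kappa
  rw [if_pos ⟨X, hX⟩]
  exact Nat.sInf_le ⟨X, hX, rfl⟩

lemma kappa_eq_card_of_isVertexCut {H : NatHypergraph} {S : Finset ℕ} (hS : H.IsVertexCut S)
    (hmin : ∀ X : Finset ℕ, H.IsVertexCut X → S.card ≤ X.card) : H.kappa = S.card := by
  refine (kappa_le_card_of_isVertexCut hS).antisymm ?_
  unfold kappa
  rw [if_pos ⟨S, hS⟩]
  refine le_csInf ⟨S.card, S, hS, rfl⟩ ?_
  rintro m ⟨X, hX, rfl⟩
  exact hmin X hX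

lemma kappa_le_kappaBar {H' H : NatHypergraph} (h : H'.IsSub H) : H'.kappa ≤ H.kappaBar := by
  refine le_csSup (s := {m | ∃ H' : NatHypergraph, H'.IsSub H ∧ H'.kappa = m})
    ⟨H.verts.card, ?_⟩ ⟨H', h, rfl⟩
  rintro m ⟨H'', h'', rfl⟩
  exact H''.kappa_le_card.trans (Finset.card_le_card h''.1)

lemma isVertexCut_of_closed {H : NatHypergraph} {X A : Finset ℕ} (hX : X ⊆ H.verts)
    (hclosed : ∀ g ∈ H.edges, Disjoint g X → ∀ x ∈ g, x ∈ A → g ⊆ A)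
    {a b : ℕ} (ha : a ∈ H.verts \ X) (hb : b ∈ H.verts \ X) (haA : a ∈ A) (hbA : b ∉ A) :
    H.IsVertexCut X := by
  have hreach : ∀ y, Relation.ReflTransGen (H.induce (H.verts \ X)).Adj a y → y ∈ A := by
    intro y hy
    induction hy with
    | refl => exact haA
    | tail _ hadj ih =>
      obtain ⟨g, hg, hx, hy⟩ := hadj
      obtain ⟨hgH, hgX⟩ := Finset.mem_filter.mp hg
      exact hclosed g hgH (Finset.disjoint_of_subset_left hgX Finset.sdiff_disjoint) _ hx ih hy
  have hmem : ∀ y ∈ H.verts \ X, y ∈ (H.induce (H.verts \ X)).verts := fun y hy =>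
    Finset.mem_inter.mpr ⟨(Finset.mem_sdiff.mp hy).1, hy⟩
  exact ⟨hX, fun hconn => hbA (hreach b (hconn a (hmem a ha) b (hmem b hb)))⟩

lemma IsComponent.subset_of_mem {G C : NatHypergraph} (hC : IsComponent G C)
    {g : Finset ℕ} (hg : g ∈ G.edges) {w : ℕ} (hwg : w ∈ g) (hwC : w ∈ C.verts) :
    g ⊆ C.verts := by
  obtain ⟨hsub, hconn, hmax⟩ := hC
  let C' : NatHypergraph :=
    { verts := C.verts ∪ g
      edges := insert g C.edges
      edge_sub := by
        intro f hf
        rcases Finset.mem_insert.mp hf with rfl | hf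
        · exact Finset.subset_union_right
        · exact (C.edge_sub f hf).trans Finset.subset_union_left
      edge_nonempty := by
        intro f hf
        rcases Finset.mem_insert.mp hf with rfl | hf
        · exact ⟨w, hwg⟩
        · exact C.edge_nonempty f hf }
  have hsub' : C'.IsSub G := by
    refine ⟨Finset.union_subset hsub.1 (G.edge_sub g hg), Finset.insert_subset hg hsub.2⟩
  have hreach : ∀ u ∈ C'.verts, Relation.ReflTransGen C'.Adj u w := by
    intro u hu
    rcases Finset.mem_union.mp hu with hu | hu
    · refine Relation.ReflTransGen.mono ?_ _ _ (hconn u hu w hwC)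
      rintro x y ⟨f, hf, hx, hy⟩
      exact ⟨f, Finset.mem_insert_of_mem hf, hx, hy⟩
    · exact .single ⟨g, Finset.mem_insert_self _ _, hu, hwg⟩
  have hconn' : C'.Connected := fun u hu v hv =>
    (hreach u hu).trans (Std.Symm.symm _ _ (hreach v hv))
  have heq : C' = C :=
    hmax C' hsub' hconn' ⟨Finset.subset_union_left, Finset.subset_insert _ _⟩
  rw [← congrArg verts heq]
  exact Finset.subset_union_right

lemma IsComponent.verts_subset {H C : NatHypergraph} {S : Finset ℕ}
    (hC : IsComponent (H.induce (H.verts \ S)) C) : C.verts ⊆ H.verts \ S :=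
  hC.1.1.trans Finset.inter_subset_right

/-- Otherwise the vertices of `H'` in `S` separate `H'`: no edge of `H + e` avoiding `S` joins
the component `C` to the rest of `H - S`. -/
lemma verts_subset_or_verts_subset_of_card_lt_kappa {H H' C : NatHypergraph} {S e : Finset ℕ}
    (hC : IsComponent (H.induce (H.verts \ S)) C)
    (he : e ⊆ S ∪ C.verts ∨ e ⊆ S ∪ (H.verts \ (S ∪ C.verts)))
    (hsub : H'.IsSub (H.addEdge e)) (hκ : S.card < H'.kappa) :
    H'.verts ⊆ S ∪ C.verts ∨ H'.verts ⊆ S ∪ (H.verts \ (S ∪ C.verts)) := by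
  by_contra! hcon
  obtain ⟨b, hb, hbC⟩ := Finset.not_subset.mp hcon.1
  obtain ⟨a, ha, haV₂⟩ := Finset.not_subset.mp hcon.2
  have hCV := hC.verts_subset
  have haC : a ∈ C.verts := by
    have haV : a ∈ H.verts := hsub.1 ha
    simp only [Finset.mem_union, Finset.mem_sdiff, not_or] at haV₂
    tauto
  have hclosed : ∀ g ∈ H'.edges, Disjoint g (H'.verts ∩ S) → ∀ x ∈ g, x ∈ C.verts →
      g ⊆ C.verts := by
    intro g hg hgX x hxg hxC
    have hgS : Disjoint g S := Finset.disjoint_left.mpr fun y hy hyS =>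
      Finset.disjoint_left.mp hgX hy (Finset.mem_inter.mpr ⟨H'.edge_sub g hg hy, hyS⟩)
    rcases eq_or_mem_of_mem_addEdge (hsub.2 hg) with rfl | hgH
    · rcases he with he | he
      · intro y hy
        exact (Finset.mem_union.mp (he hy)).resolve_left (Finset.disjoint_left.mp hgS hy)
      · have hxV₂ :=
          (Finset.mem_union.mp (he hxg)).resolve_left (Finset.disjoint_left.mp hgS hxg)
        exact absurd (Finset.mem_union_right S hxC) (Finset.mem_sdiff.mp hxV₂).2
    · refine hC.subset_of_mem (Finset.mem_filter.mpr ⟨hgH, fun y hy => ?_⟩) hxg hxC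
      exact Finset.mem_sdiff.mpr
        ⟨(hsub.1 ((H'.edge_sub g hg) hy)), Finset.disjoint_left.mp hgS hy⟩
  have hcut : H'.IsVertexCut (H'.verts ∩ S) := by
    refine isVertexCut_of_closed Finset.inter_subset_left hclosed (a := a) (b := b) ?_ ?_ haC ?_
    · exact Finset.mem_sdiff.mpr
        ⟨ha, fun h => (Finset.mem_sdiff.mp (hCV haC)).2 (Finset.mem_inter.mp h).2⟩
    · exact Finset.mem_sdiff.mpr
        ⟨hb, fun h => hbC (Finset.mem_union_left _ (Finset.mem_inter.mp h).2)⟩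
    · exact fun h => hbC (Finset.mem_union_right S h)
  have := (kappa_le_card_of_isVertexCut hcut).trans
    (Finset.card_le_card Finset.inter_subset_right)
  omega

lemma not_isSub_addEdge_of_kappaBar_le {H Hj H' : NatHypergraph} {e : Finset ℕ} {k : ℕ}
    (hbar : H.kappaBar ≤ k) (hj : Hj.IsSub H) (hκ : k < H'.kappa) (he : ¬ e ⊆ Hj.verts) :
    ¬ H'.IsSub (Hj.addEdge e) := by
  intro hsub
  by_cases heH' : e ∈ H'.edges
  · exact he ((H'.edge_sub e heH').trans hsub.1)
  · have := kappa_le_kappaBar ((hsub.of_addEdge heH').trans hj)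
    omega

/-- An edge `e` of the complement of `H[S ∪ A]` that is not an edge of the complement of
`H[S]` has a vertex in `A`, so it cannot lie in `H[S ∪ B] + e` for `B` disjoint from `A`. -/
lemma isSub_induce_addEdge_of_isSub_or {H H' : NatHypergraph} {S A B e : Finset ℕ} {k : ℕ}
    (hbar : H.kappaBar ≤ k) (hκ : k < H'.kappa) (hAB : Disjoint A B)
    (he : e ⊆ (H.induce (S ∪ A)).verts) (heE : e ∉ (H.induce (S ∪ A)).edges)
    (heS : ¬(e ⊆ S ∧ e ∉ (H.induce S).edges))
    (hor : H'.IsSub ((H.induce (S ∪ A)).addEdge e) ∨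
      H'.IsSub ((H.induce (S ∪ B)).addEdge e)) :
    H'.IsSub ((H.induce (S ∪ A)).addEdge e) := by
  refine hor.resolve_right (not_isSub_addEdge_of_kappaBar_le hbar (induce_isSub _ _) hκ ?_)
  have hnS : ¬ e ⊆ S := fun hS =>
    heE (induce_edges_mono H Finset.subset_union_left (not_not.mp fun h => heS ⟨hS, h⟩))
  obtain ⟨v, hve, hvS⟩ := Finset.not_subset.mp hnS
  have hvA : v ∈ A :=
    (Finset.mem_union.mp (Finset.inter_subset_right (he hve))).resolve_left hvS
  intro heB
  rcases Finset.mem_union.mp (Finset.inter_subset_right (heB hve)) with hv | hv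
  · exact hvS hv
  · exact Finset.disjoint_left.mp hAB hvA hv

end NatHypergraph

theorem stmt_3_general (k r : ℕ)
    (H : NatHypergraph) (hH : H.VertexKMaximal r k)
    (S : Finset ℕ) (H1 H2 : NatHypergraph) (hsep : H.IsSeparationTriple S H1 H2)
    (e : Finset ℕ) :
    (((e ⊆ H1.verts ∧ e ∉ H1.edges) ∨ (e ⊆ H2.verts ∧ e ∉ H2.edges)) →
      ∀ H' : NatHypergraph, H'.IsSub (H.addEdge e) → k + 1 ≤ H'.kappa →
        H'.IsSub (H1.addEdge e) ∨ H'.IsSub (H2.addEdge e)) ∧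
    ((e ⊆ H1.verts ∧ e ∉ H1.edges ∧ ¬(e ⊆ S ∧ e ∉ (H.induce S).edges)) →
      ∀ H' : NatHypergraph, H'.IsSub (H.addEdge e) → k + 1 ≤ H'.kappa →
        H'.IsSub (H1.addEdge e)) ∧
    ((e ⊆ H2.verts ∧ e ∉ H2.edges ∧ ¬(e ⊆ S ∧ e ∉ (H.induce S).edges)) →
      ∀ H' : NatHypergraph, H'.IsSub (H.addEdge e) → k + 1 ≤ H'.kappa →
        H'.IsSub (H2.addEdge e)) := by
  obtain ⟨hScut, hSmin, C, hC, rfl, rfl⟩ := hsep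
  set V₂ := H.verts \ (S ∪ C.verts)
  have hbar : H.kappaBar ≤ k := hH.2.1
  have hSk : S.card ≤ k := by
    rw [← NatHypergraph.kappa_eq_card_of_isVertexCut hScut hSmin]
    exact (NatHypergraph.kappa_le_kappaBar ⟨subset_rfl, subset_rfl⟩).trans hbar
  have hdisj : Disjoint C.verts V₂ :=
    Finset.disjoint_of_subset_left Finset.subset_union_right Finset.disjoint_sdiff
  have hside : ∀ {W : Finset ℕ}, e ⊆ (H.induce W).verts → e ⊆ W :=
    fun h => h.trans Finset.inter_subset_right
  have hsplit : ∀ H' : NatHypergraph, H'.IsSub (H.addEdge e) → k + 1 ≤ H'.kappa →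
      e ⊆ S ∪ C.verts ∨ e ⊆ S ∪ V₂ →
      H'.IsSub ((H.induce (S ∪ C.verts)).addEdge e) ∨ H'.IsSub ((H.induce (S ∪ V₂)).addEdge e) :=
    fun H' hsub hκ he =>
      (NatHypergraph.verts_subset_or_verts_subset_of_card_lt_kappa hC he hsub (by omega)).imp
        hsub.induce_addEdge hsub.induce_addEdge
  refine ⟨fun he H' hsub hκ => hsplit H' hsub hκ (he.imp (hside ·.1) (hside ·.1)),
    fun ⟨he, heE, heS⟩ H' hsub hκ => ?_, fun ⟨he, heE, heS⟩ H' hsub hκ => ?_⟩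
  · exact NatHypergraph.isSub_induce_addEdge_of_isSub_or hbar hκ hdisj he heE heS
      (hsplit H' hsub hκ (.inl (hside he)))
  · exact NatHypergraph.isSub_induce_addEdge_of_isSub_or hbar hκ hdisj.symm he heE heS
      (hsplit H' hsub hκ (.inr (hside he))).symm

/-- With a separation triple `(S, H₁, H₂)` of a vertex-`k`-maximal
`r`-uniform hypergraph `H`, every `(k+1)`-vertex-connected subhypergraph of `H + e`
with `e ∈ E(H₁^c) ∪ E(H₂^c)` lies in `H₁ + e` or `H₂ + e`; and if moreover
`e ∈ E(Hᵢ^c) ∖ E((H[S])^c)`, it lies in `Hᵢ + e`. -/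
theorem stmt_3 (n k r : ℕ) (hk : 2 ≤ k) (hr : 2 ≤ r) (hn : k + r ≤ n)
    (H : NatHypergraph) (hcard : H.verts.card = n) (hH : H.VertexKMaximal r k)
    (S : Finset ℕ) (H1 H2 : NatHypergraph) (hsep : H.IsSeparationTriple S H1 H2)
    (e : Finset ℕ) (hecard : e.card = r) :
    (((e ⊆ H1.verts ∧ e ∉ H1.edges) ∨ (e ⊆ H2.verts ∧ e ∉ H2.edges)) →
      ∀ H' : NatHypergraph, H'.IsSub (H.addEdge e) → k + 1 ≤ H'.kappa →
        H'.IsSub (H1.addEdge e) ∨ H'.IsSub (H2.addEdge e)) ∧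
    ((e ⊆ H1.verts ∧ e ∉ H1.edges ∧ ¬(e ⊆ S ∧ e ∉ (H.induce S).edges)) →
      ∀ H' : NatHypergraph, H'.IsSub (H.addEdge e) → k + 1 ≤ H'.kappa →
        H'.IsSub (H1.addEdge e)) ∧
    ((e ⊆ H2.verts ∧ e ∉ H2.edges ∧ ¬(e ⊆ S ∧ e ∉ (H.induce S).edges)) →
      ∀ H' : NatHypergraph, H'.IsSub (H.addEdge e) → k + 1 ≤ H'.kappa →
        H'.IsSub (H2.addEdge e)) :=
  stmt_3_general k r H hH S H1 H2 hsep e
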